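/- arXiv:2003.04785 — 2 statements merged into one kernel-verified Lean document; each statement's English description precedes it below -/
import Mathlib

section
/- For every admissible sequence S, the Lie algebras n(S) and n(C) are nilpotent, and the nilpotency degree of n(S) is greater than or equal to the nilpotency degree of n(C). -/
open scoped Classical

noncomputable section

namespace Paper

variable {F : Type*}

attribute [local instance] LieRing.ofAssociativeRing

/-- Offset (starting global index) of the `i`-th block. -/
def off {k : ℕ} (dv : Fin k → ℕ) (i : Fin k) : ℕ := ∑ t ∈ Finset.Iio i, dv t

/-- Total size `d = d₁ + ⋯ + d_k`. -/
def dtot {k : ℕ} (dv : Fin k → ℕ) : ℕ := ∑ t, dv t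

theorem off_add_lt {k : ℕ} (dv : Fin k → ℕ) (i : Fin k) (r : Fin (dv i)) :
    off dv i + (r : ℕ) < dtot dv := by
  have h1 : off dv i + dv i ≤ dtot dv := by
    have h : off dv i + dv i = ∑ t ∈ insert i (Finset.Iio i), dv t := by
      rw [Finset.sum_insert (by simp), add_comm]
      rfl
    rw [h]
    exact Finset.sum_le_sum_of_subset (Finset.subset_univ _)
  have := r.isLt
  omega

/-- The global index of the `r`-th row/column of the `i`-th block. -/
def emb {k : ℕ} (dv : Fin k → ℕ) (i : Fin k) (r : Fin (dv i)) : Fin (dtot dv) :=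
  ⟨off dv i + r, off_add_lt dv i r⟩

/-- The projection `p_{i,j}` onto the `(i,j)`-block. -/
def blk {k : ℕ} (dv : Fin k → ℕ) (i j : Fin k)
    (A : Matrix (Fin (dtot dv)) (Fin (dtot dv)) F) :
    Matrix (Fin (dv i)) (Fin (dv j)) F :=
  Matrix.of fun r s => A (emb dv i r) (emb dv j s)

/-- The `p × p` upper triangular Jordan block `J^p(α)`. -/
def Jord [Field F] (p : ℕ) (α : F) : Matrix (Fin p) (Fin p) F :=
  Matrix.of fun a b =>
    if (b : ℕ) = (a : ℕ) then α else if (b : ℕ) = (a : ℕ) + 1 then 1 else 0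

/-- The matrix whose `(i,j)` block is `M` and all other blocks vanish. -/
def embMat [Field F] {k : ℕ} (dv : Fin k → ℕ) (i j : Fin k)
    (M : Matrix (Fin (dv i)) (Fin (dv j)) F) :
    Matrix (Fin (dtot dv)) (Fin (dtot dv)) F :=
  Matrix.of fun x y => ∑ r, ∑ s, if x = emb dv i r ∧ y = emb dv j s then M r s else 0

/-- The block diagonal matrix `D(α,λ) = J^{d₁}(α) ⊕ J^{d₂}(α-λ) ⊕ ⋯ ⊕ J^{d_k}(α-(k-1)λ)`. -/
def Dmat [Field F] {k : ℕ} (dv : Fin k → ℕ) (α lam : F) :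
    Matrix (Fin (dtot dv)) (Fin (dtot dv)) F :=
  ∑ i : Fin k, embMat dv i i (Jord (dv i) (α - ((i : ℕ) : F) * lam))

/-- `A` is the matrix `E(S)` of an admissible sequence `S`:  all blocks vanish except the
blocks `p_{i,i+1}`, and each block `p_{i,i+1}` has nonzero lower-left (i.e. `(dᵢ,1)`) entry. -/
def IsEShaped [Field F] {k : ℕ} (dv : Fin k → ℕ)
    (A : Matrix (Fin (dtot dv)) (Fin (dtot dv)) F) : Prop :=
  (∀ i j : Fin k, (j : ℕ) ≠ (i : ℕ) + 1 → blk dv i j A = 0) ∧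
  (∀ i j : Fin k, (j : ℕ) = (i : ℕ) + 1 →
    ∀ (hr : dv i - 1 < dv i) (hs : 0 < dv j),
      A (emb dv i ⟨dv i - 1, hr⟩) (emb dv j ⟨0, hs⟩) ≠ 0)

/-- The matrix `E(C)` of the canonical sequence `C`. -/
def CanE (F : Type*) [Field F] {k : ℕ} (dv : Fin k → ℕ) :
    Matrix (Fin (dtot dv)) (Fin (dtot dv)) F :=
  Matrix.of fun x y =>
    if ∃ i j : Fin k, (j : ℕ) = (i : ℕ) + 1 ∧
        (x : ℕ) = off dv i + (dv i - 1) ∧ (y : ℕ) = off dv j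
    then 1 else 0

/-- The Lie subalgebra `h(α,λ,S)` of `gl(d,F)` generated by `D(α,λ)` and `E(S) = A`. -/
def hAlg (F : Type*) [Field F] {k : ℕ} (dv : Fin k → ℕ) (α lam : F)
    (A : Matrix (Fin (dtot dv)) (Fin (dtot dv)) F) :
    LieSubalgebra F (Matrix (Fin (dtot dv)) (Fin (dtot dv)) F) :=
  LieSubalgebra.lieSpan F _ {Dmat dv α lam, A}

/-- The Lie subalgebra `n(S)` generated by the matrices `(ad D(0,0))^l (E(S))`, `l ≥ 0`. -/
def nAlg (F : Type*) [Field F] {k : ℕ} (dv : Fin k → ℕ)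
    (A : Matrix (Fin (dtot dv)) (Fin (dtot dv)) F) :
    LieSubalgebra F (Matrix (Fin (dtot dv)) (Fin (dtot dv)) F) :=
  LieSubalgebra.lieSpan F _ {X | ∃ l : ℕ, X = (fun Y => ⁅Dmat dv (0 : F) 0, Y⁆)^[l] A}

/-- `r_{i,j}`:  `0` if the `(i,j)`-blocks of all members of `h(0,0,C)` vanish, and otherwise
the minimal rank of a nonzero `(i,j)`-block of a member of `h(0,0,C)`. -/
def rr (F : Type*) [Field F] {k : ℕ} (dv : Fin k → ℕ) (i j : Fin k) : ℕ :=
  if ∀ X ∈ hAlg F dv 0 0 (CanE F dv), blk dv i j X = 0 then 0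
  else sInf {n | ∃ X ∈ hAlg F dv 0 0 (CanE F dv),
    blk dv i j X ≠ 0 ∧ (blk dv i j X).rank = n}

/-- The automorphism `φ(A)_{i,j} = (−1)^{i−j+1} A_{d+1−j,d+1−i}` (here written 0-indexed). -/
def Phi (F : Type*) [Field F] (d : ℕ) (A : Matrix (Fin d) (Fin d) F) :
    Matrix (Fin d) (Fin d) F :=
  Matrix.of fun x y =>
    (-1 : F) ^ ((x : ℕ) + (y : ℕ) + 1) *
      A ⟨d - 1 - (y : ℕ), by have := y.isLt; omega⟩ ⟨d - 1 - (x : ℕ), by have := x.isLt; omega⟩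

/-- `d⃗` is symmetric: `dᵢ = d_{k+1−i}` for all `i` (0-indexed: `dᵢ = d_{k-1-i}`). -/
def SymmSeq {k : ℕ} (dv : Fin k → ℕ) : Prop :=
  ∀ i j : Fin k, (i : ℕ) + (j : ℕ) = k - 1 → dv i = dv j

/-- `d⃗` is odd-symmetric: symmetric, `k` odd and the middle `d_{(k+1)/2}` odd. -/
def OddSymmSeq {k : ℕ} (dv : Fin k → ℕ) : Prop :=
  SymmSeq dv ∧ Odd k ∧ ∀ i : Fin k, 2 * (i : ℕ) = k - 1 → Odd (dv i)

/-- Conditions (1) and (2) of Definition `Normalized` (weak normalization), expressed on the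
matrix `A = E(S)`, so that `S(i)_{a,b} = A (emb i a) (emb (i+1) b)` (0-indexed). -/
def IsWeaklyNormalized [Field F] {k : ℕ} (dv : Fin k → ℕ)
    (A : Matrix (Fin (dtot dv)) (Fin (dtot dv)) F) : Prop :=
  (∀ i j : Fin k, (j : ℕ) = (i : ℕ) + 1 →
      ∀ (hr : dv i - 1 < dv i) (hs : 0 < dv j),
        A (emb dv i ⟨dv i - 1, hr⟩) (emb dv j ⟨0, hs⟩) = 1) ∧
  (∀ i j l : Fin k, (j : ℕ) = (i : ℕ) + 1 → (l : ℕ) = (j : ℕ) + 1 →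
      ∀ (hr : dv i - 1 < dv i) (s : Fin (dv j)) (hs : dv j - 1 - (s : ℕ) < dv j)
        (h0 : 0 < dv l),
        A (emb dv i ⟨dv i - 1, hr⟩) (emb dv j s) =
          A (emb dv j ⟨dv j - 1 - (s : ℕ), hs⟩) (emb dv l ⟨0, h0⟩))

/-- The sequence `S` (given through its matrix `A = E(S)`) is normalized. -/
def IsNormalized [Field F] {k : ℕ} (dv : Fin k → ℕ)
    (A : Matrix (Fin (dtot dv)) (Fin (dtot dv)) F) : Prop :=
  IsWeaklyNormalized dv A ∧
  (∀ i j : Fin k, (i : ℕ) = 0 → (j : ℕ) = 1 →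
      ∀ (r : Fin (dv i)) (hs : 0 < dv j), (r : ℕ) ≠ dv i - 1 →
        A (emb dv i r) (emb dv j ⟨0, hs⟩) = 0) ∧
  (∀ i j : Fin k, (j : ℕ) = (i : ℕ) + 1 → (j : ℕ) = k - 1 →
      ∀ (hr : dv i - 1 < dv i) (s : Fin (dv j)), (s : ℕ) ≠ 0 →
        A (emb dv i ⟨dv i - 1, hr⟩) (emb dv j s) = 0)

/-- Membership in the group `G(d⃗)`: a block diagonal matrix each of whose diagonal blocks is
a polynomial with nonzero constant term evaluated at `J^{dᵢ}(0)`. -/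
def InG (F : Type*) [Field F] {k : ℕ} (dv : Fin k → ℕ)
    (P : Matrix (Fin (dtot dv)) (Fin (dtot dv)) F) : Prop :=
  IsUnit P ∧ ∃ q : Fin k → Polynomial F, (∀ i, (q i).coeff 0 ≠ 0) ∧
    P = ∑ i : Fin k, embMat dv i i (Polynomial.aeval (Jord (dv i) (0 : F)) (q i))

/-- The nilpotency degree of a Lie algebra: the least `m` with `L^m = 0` in the lower central
series `L^0 = L`, `L^{i+1} = [L, L^i]`. -/
def nilDeg (F : Type*) (L : Type*) [Field F] [LieRing L] [LieAlgebra F L] : ℕ :=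
  sInf {m | LieModule.lowerCentralSeries F L L m = ⊥}

/-!
Grade matrices by giving the entry `(x, y)` the degree `w y - w x`, where `w x` is the index of
the block containing `x` minus `x`. Then `D(0,0)` is homogeneous of degree `-1`, and `E(S)` has
degree `≤ 0`, its degree-`0` part `E₀` being supported exactly on the corner entries `(dᵢ, 1)` of
the blocks `(i, i+1)`. The leading part of a bracket is the bracket of the leading parts, so the
leading parts of the lower central series of `n(S)` span a space containing the lower central
series of `n(E₀)`: `n(E₀)^m = 0` whenever `n(S)^m = 0`. The corner entries lie on the
superdiagonal, away from the support of `D(0,0)`, so conjugation by a suitable invertible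
diagonal matrix fixes `D(0,0)` and sends `E₀` to `E(C)`, whence `n(E₀) ≅ n(C)`. Finally `n(S)` is
nilpotent because it consists of strictly upper triangular matrices.
-/

section LowerCentralSeries

variable {R L L' : Type*} [CommRing R] [LieRing L] [LieAlgebra R L] [LieRing L'] [LieAlgebra R L']

theorem lowerCentralSeries_eq_bot_iff_of_lieEquiv (e : L ≃ₗ⁅R⁆ L') (m : ℕ) :
    LieModule.lowerCentralSeries R L L m = ⊥ ↔
      LieModule.lowerCentralSeries R L' L' m = ⊥ := by
  rw [← LieIdeal.lowerCentralSeries_map_eq m e.surjective, LieIdeal.map_eq_bot_iff,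
    (LieHom.ker_eq_bot _).mpr e.injective, le_bot_iff]

theorem coe_mem_of_mem_lowerCentralSeries {K : LieSubalgebra R L}
    (P : ℕ → Submodule R L) (h0 : ∀ x ∈ K, x ∈ P 0)
    (hsucc : ∀ m, ∀ x ∈ K, ∀ y ∈ P m, ⁅x, y⁆ ∈ P (m + 1)) :
    ∀ m, ∀ x ∈ LieModule.lowerCentralSeries R K K m, (x : L) ∈ P m := by
  intro m
  induction m with
  | zero => exact fun x _ => h0 x x.2
  | succ m ih =>
    intro x hx
    rw [LieModule.lowerCentralSeries_succ, ← LieSubmodule.mem_toSubmodule,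
      LieSubmodule.lieIdeal_oper_eq_linear_span'] at hx
    refine (Submodule.span_le (p := (P (m + 1)).comap K.toSubmodule.subtype)).mpr ?_ hx
    rintro _ ⟨y, -, z, hz, rfl⟩
    exact hsucc m y y.2 z (ih z hz)

theorem lowerCentralSeries_eq_bot_of_lie_mem {K : LieSubalgebra R L}
    (P : ℕ → Submodule R L) (h0 : ∀ x ∈ K, x ∈ P 0)
    (hsucc : ∀ m, ∀ x ∈ K, ∀ y ∈ P m, ⁅x, y⁆ ∈ P (m + 1)) {m : ℕ}
    (hm : P m = ⊥) :
    LieModule.lowerCentralSeries R K K m = ⊥ := by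
  rw [LieSubmodule.eq_bot_iff]
  intro x hx
  have := coe_mem_of_mem_lowerCentralSeries P h0 hsucc m x hx
  rw [hm, Submodule.mem_bot] at this
  exact Subtype.ext this

theorem lie_mem_span_of_forall {s t u : Set L} (h : ∀ a ∈ s, ∀ b ∈ t, ⁅a, b⁆ ∈ u)
    {x y : L} (hx : x ∈ Submodule.span R s) (hy : y ∈ Submodule.span R t) :
    ⁅x, y⁆ ∈ Submodule.span R u := by
  induction hx, hy using Submodule.span_induction₂ with
  | mem_mem x y hx hy => exact Submodule.subset_span (h x hx y hy)
  | zero_left y hy => simp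
  | zero_right x hx => simp
  | add_left x y z _ _ _ hx hy => simpa only [add_lie] using add_mem hx hy
  | add_right x y z _ _ _ hx hy => simpa only [lie_add] using add_mem hx hy
  | smul_left r x y _ _ h => simpa only [smul_lie] using Submodule.smul_mem _ r h
  | smul_right r x y _ _ h => simpa only [lie_smul] using Submodule.smul_mem _ r h

end LowerCentralSeries

section NilpotencyDegree

variable {F L L' : Type*} [Field F] [LieRing L] [LieAlgebra F L] [LieRing L'] [LieAlgebra F L']

theorem isNilpotent_of_lowerCentralSeries_eq_bot_imp [LieRing.IsNilpotent L]
    (h : ∀ m, LieModule.lowerCentralSeries F L L m = ⊥ →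
      LieModule.lowerCentralSeries F L' L' m = ⊥) :
    LieRing.IsNilpotent L' := by
  obtain ⟨m, hm⟩ := (LieModule.isNilpotent_iff F L L).mp ‹_›
  exact (LieModule.isNilpotent_iff F L' L').mpr ⟨m, h m hm⟩

theorem nilDeg_le_of_lowerCentralSeries_eq_bot_imp [LieRing.IsNilpotent L]
    (h : ∀ m, LieModule.lowerCentralSeries F L L m = ⊥ →
      LieModule.lowerCentralSeries F L' L' m = ⊥) :
    nilDeg F L' ≤ nilDeg F L :=
  Nat.sInf_le (h _ (Nat.sInf_mem ((LieModule.isNilpotent_iff F L L).mp ‹_›)))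

end NilpotencyDegree

section Grading

variable {ι R : Type*} [CommRing R] (w : ι → ℤ)

def degLE (c : ℤ) : Submodule R (Matrix ι ι R) where
  carrier := {X | ∀ x y, c < w y - w x → X x y = 0}
  add_mem' hX hY x y h := by rw [Matrix.add_apply, hX x y h, hY x y h, add_zero]
  zero_mem' _ _ _ := rfl
  smul_mem' r X hX x y h := by rw [Matrix.smul_apply, hX x y h, smul_zero]

def homogPart (c : ℤ) : Matrix ι ι R →ₗ[R] Matrix ι ι R where
  toFun X := Matrix.of fun x y => if w y - w x = c then X x y else 0
  map_add' X Y := by ext x y; simp only [Matrix.of_apply, Matrix.add_apply]; split_ifs <;> simp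
  map_smul' r X := by ext x y; simp only [Matrix.of_apply, Matrix.smul_apply]; split_ifs <;> simp

variable {w}

theorem homogPart_apply (c : ℤ) (X : Matrix ι ι R) (x y : ι) :
    homogPart w c X x y = if w y - w x = c then X x y else 0 := rfl

theorem degLE_mono {a b : ℤ} (hab : a ≤ b) :
    (degLE w a : Submodule R (Matrix ι ι R)) ≤ degLE w b :=
  fun _ hX x y h => hX x y (by omega)

theorem mul_mem_degLE [Fintype ι] {a b : ℤ} {X Y : Matrix ι ι R} (hX : X ∈ degLE w a)
    (hY : Y ∈ degLE w b) : X * Y ∈ degLE w (a + b) := by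
  intro x y h
  rw [Matrix.mul_apply]
  refine Finset.sum_eq_zero fun t _ => ?_
  by_cases ht : w t - w x ≤ a
  · rw [hY t y (by omega), mul_zero]
  · rw [hX x t (by omega), zero_mul]

theorem lie_mem_degLE [Fintype ι] [DecidableEq ι] {a b : ℤ} {X Y : Matrix ι ι R}
    (hX : X ∈ degLE w a) (hY : Y ∈ degLE w b) : ⁅X, Y⁆ ∈ degLE w (a + b) :=
  Ring.lie_def X Y ▸ sub_mem (mul_mem_degLE hX hY) (add_comm b a ▸ mul_mem_degLE hY hX)

theorem degLE_eq_bot {c : ℤ} (h : ∀ x y, c < w y - w x) : (degLE w c : Submodule R _) = ⊥ :=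
  (Submodule.eq_bot_iff _).mpr fun _ hX => Matrix.ext fun x y => hX x y (h x y)

theorem homogPart_mul [Fintype ι] {a b : ℤ} {X Y : Matrix ι ι R} (hX : X ∈ degLE w a)
    (hY : Y ∈ degLE w b) : homogPart w (a + b) (X * Y) = homogPart w a X * homogPart w b Y := by
  ext x y
  simp only [homogPart_apply, Matrix.mul_apply]
  split_ifs with h
  · refine Finset.sum_congr rfl fun t _ => ?_
    rcases lt_trichotomy (w t - w x) a with h1 | h1 | h1
    · rw [hY t y (by omega), if_neg (by omega), if_neg (by omega)]; simp
    · rw [if_pos h1, if_pos (by omega)]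
    · rw [hX x t h1]; simp
  · refine (Finset.sum_eq_zero fun t _ => ?_).symm
    split_ifs <;> first | omega | simp

theorem homogPart_lie [Fintype ι] [DecidableEq ι] {a b : ℤ} {X Y : Matrix ι ι R}
    (hX : X ∈ degLE w a) (hY : Y ∈ degLE w b) :
    homogPart w (a + b) ⁅X, Y⁆ = ⁅homogPart w a X, homogPart w b Y⁆ := by
  rw [Ring.lie_def, Ring.lie_def, map_sub, homogPart_mul hX hY, add_comm a b, homogPart_mul hY hX]

theorem iterate_lie_mem_degLE_and_homogPart [Fintype ι] [DecidableEq ι] {D X : Matrix ι ι R}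
    {e c : ℤ} (hD : ∀ x y, D x y ≠ 0 → w y - w x = e) (hX : X ∈ degLE w c) (l : ℕ) :
    (fun Y => ⁅D, Y⁆)^[l] X ∈ degLE w (c + l * e) ∧
      homogPart w (c + l * e) ((fun Y => ⁅D, Y⁆)^[l] X) =
        (fun Y => ⁅D, Y⁆)^[l] (homogPart w c X) := by
  have hDdeg : D ∈ degLE w e := fun x y h => by_contra fun hne => h.ne' (hD x y hne)
  have hDhom : homogPart w e D = D := by
    ext x y
    by_cases h : D x y = 0
    · simp [homogPart_apply, h]
    · rw [homogPart_apply, if_pos (hD x y h)]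
  induction l with
  | zero => simpa using hX
  | succ l ih =>
    have hcl : c + ((l + 1 : ℕ) : ℤ) * e = e + (c + l * e) := by push_cast; ring
    rw [Function.iterate_succ_apply', Function.iterate_succ_apply', hcl,
      homogPart_lie hDdeg ih.1, hDhom, ih.2]
    exact ⟨lie_mem_degLE hDdeg ih.1, rfl⟩

def negDegSubalgebra [Fintype ι] [DecidableEq ι] (w : ι → ℤ) :
    LieSubalgebra R (Matrix ι ι R) :=
  { degLE w (-1) with
    lie_mem' := fun hX hY => degLE_mono (by norm_num) (lie_mem_degLE hX hY) }

theorem isNilpotent_of_le_negDegSubalgebra [Fintype ι] [DecidableEq ι]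
    {K : LieSubalgebra R (Matrix ι ι R)} (hK : K ≤ negDegSubalgebra w) :
    LieRing.IsNilpotent K := by
  obtain ⟨B, hB⟩ := Finite.exists_le fun x => (w x).natAbs
  have hbot : LieModule.lowerCentralSeries R K K (2 * B) = ⊥ :=
    lowerCentralSeries_eq_bot_of_lie_mem (fun m => degLE w (-1 - m))
      (fun x hx => by rw [Nat.cast_zero, sub_zero]; exact hK hx)
      (fun m x hx y hy => by
        convert lie_mem_degLE (hK hx) hy using 2
        push_cast; ring)
      (degLE_eq_bot fun x y => by have := hB x; have := hB y; push_cast; omega)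
  exact (LieModule.isNilpotent_iff R K K).mpr ⟨_, hbot⟩

theorem lowerCentralSeries_lieSpan_eq_bot_of_homogPart [Fintype ι] [DecidableEq ι]
    {S S' : Set (Matrix ι ι R)}
    (hS' : ∀ Y ∈ S', ∃ X ∈ S, ∃ c, X ∈ degLE w c ∧ homogPart w c X = Y) {m : ℕ}
    (h : LieModule.lowerCentralSeries R (LieSubalgebra.lieSpan R _ S)
      (LieSubalgebra.lieSpan R _ S) m = ⊥) :
    LieModule.lowerCentralSeries R (LieSubalgebra.lieSpan R _ S')
      (LieSubalgebra.lieSpan R _ S') m = ⊥ := by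
  set K := LieSubalgebra.lieSpan R _ S
  let G : ℕ → Set (Matrix ι ι R) := fun m =>
    {Y | ∃ X ∈ LieModule.lowerCentralSeries R K K m, ∃ c,
      (X : Matrix ι ι R) ∈ degLE w c ∧ homogPart w c X = Y}
  have hG : ∀ m, ∀ Y ∈ G 0, ∀ Z ∈ G m, ⁅Y, Z⁆ ∈ G (m + 1) := by
    rintro m _ ⟨X, -, c, hX, rfl⟩ _ ⟨X', hX', c', hX'c, rfl⟩
    refine ⟨⁅X, X'⁆, ?_, c + c', lie_mem_degLE hX hX'c, homogPart_lie hX hX'c⟩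
    rw [LieModule.lowerCentralSeries_succ]
    exact LieSubmodule.lie_mem_lie (LieSubmodule.mem_top X) hX'
  let P0 : LieSubalgebra R (Matrix ι ι R) :=
    { Submodule.span R (G 0) with
      lie_mem' := fun hY hZ => Submodule.span_mono
        (by rintro _ ⟨X, -, hX⟩; exact ⟨X, LieSubmodule.mem_top X, hX⟩)
        (lie_mem_span_of_forall (hG 0) hY hZ) }
  have hP0 : LieSubalgebra.lieSpan R _ S' ≤ P0 := LieSubalgebra.lieSpan_le.mpr fun Y hY => by
    obtain ⟨X, hX, c, hXc, rfl⟩ := hS' Y hY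
    exact Submodule.subset_span
      ⟨⟨X, LieSubalgebra.subset_lieSpan hX⟩, LieSubmodule.mem_top _, c, hXc, rfl⟩
  refine lowerCentralSeries_eq_bot_of_lie_mem (fun m => Submodule.span R (G m))
    (fun x hx => hP0 hx) (fun m x hx y hy => lie_mem_span_of_forall (hG m) (hP0 hx) hy) ?_
  rw [Submodule.span_eq_bot]
  rintro _ ⟨X, hX, c, -, rfl⟩
  rw [h, LieSubmodule.mem_bot] at hX
  simp [hX]

end Grading

theorem diagonal_mul_mul_inv_apply {ι F : Type*} [Fintype ι] [DecidableEq ι] [Field F]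
    {f : ι → F} (hf : ∀ x, f x ≠ 0) (M : Matrix ι ι F) (x y : ι) :
    (Matrix.diagonal f * M * (Matrix.diagonal f)⁻¹) x y = f x * M x y * (f y)⁻¹ := by
  have hinv : (Matrix.diagonal f)⁻¹ = Matrix.diagonal fun x => (f x)⁻¹ :=
    Matrix.inv_eq_right_inv (by rw [Matrix.diagonal_mul_diagonal]; simp [hf])
  rw [hinv, Matrix.mul_diagonal, Matrix.diagonal_mul]

section SuperdiagonalScaling

variable {F : Type*} [Field F] {n : ℕ} (N : Matrix (Fin n) (Fin n) F)

def superdiagStep (t : ℕ) : F :=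
  if h : t + 1 < n then
    if N ⟨t, by omega⟩ ⟨t + 1, h⟩ = 0 then 1 else N ⟨t, by omega⟩ ⟨t + 1, h⟩
  else 1

def superdiagScale (x : Fin n) : F := ∏ t ∈ Finset.range x, superdiagStep N t

theorem superdiagScale_ne_zero (x : Fin n) : superdiagScale N x ≠ 0 := by
  refine Finset.prod_ne_zero_iff.mpr fun t _ => ?_
  unfold superdiagStep
  split_ifs with h1 h2 <;> simp [*]

theorem superdiagScale_succ {x y : Fin n} (hxy : (y : ℕ) = x + 1) :
    superdiagScale N y = superdiagScale N x * if N x y = 0 then 1 else N x y := by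
  have hx : (⟨x, by omega⟩ : Fin n) = x := rfl
  have hy : (⟨x + 1, by omega⟩ : Fin n) = y := Fin.ext hxy.symm
  rw [superdiagScale, hxy, Finset.prod_range_succ, superdiagStep, dif_pos (by omega), hx, hy]
  rfl

variable {N}

theorem conj_superdiagScale_of_superdiag (hN : ∀ x y, N x y ≠ 0 → (y : ℕ) = x + 1) :
    Matrix.diagonal (superdiagScale N) * N * (Matrix.diagonal (superdiagScale N))⁻¹ =
      Matrix.of fun x y => if N x y = 0 then 0 else 1 := by
  ext x y
  rw [diagonal_mul_mul_inv_apply (superdiagScale_ne_zero N), Matrix.of_apply]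
  split_ifs with h
  · simp [h]
  · rw [superdiagScale_succ N (hN x y h), if_neg h]
    field_simp [superdiagScale_ne_zero N x]

theorem conj_superdiagScale_of_disjoint {M : Matrix (Fin n) (Fin n) F}
    (hM : ∀ x y, M x y ≠ 0 → (y : ℕ) = x + 1 ∧ N x y = 0) :
    Matrix.diagonal (superdiagScale N) * M * (Matrix.diagonal (superdiagScale N))⁻¹ = M := by
  ext x y
  rw [diagonal_mul_mul_inv_apply (superdiagScale_ne_zero N)]
  by_cases h : M x y = 0
  · simp [h]
  · obtain ⟨hxy, hN⟩ := hM x y h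
    rw [superdiagScale_succ N hxy, if_pos hN, mul_one, mul_comm, ← mul_assoc,
      inv_mul_cancel₀ (superdiagScale_ne_zero N x), one_mul]

end SuperdiagonalScaling

section Blocks

variable {k : ℕ} (dv : Fin k → ℕ)

theorem emb_eq_finSigmaFinEquiv (i : Fin k) (r : Fin (dv i)) :
    emb dv i r = finSigmaFinEquiv ⟨i, r⟩ := by
  ext
  rw [finSigmaFinEquiv_apply]
  show off dv i + r = _
  congr 1
  refine Eq.trans ?_ (Finset.sum_map Finset.univ (Fin.castLEEmb i.2.le) dv)
  rw [off]
  congr 1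
  ext t
  simp only [Finset.mem_Iio, Finset.mem_map, Finset.mem_univ, true_and, Fin.castLEEmb_apply]
  exact ⟨fun h => ⟨⟨t, h⟩, rfl⟩, by rintro ⟨s, rfl⟩; exact s.2⟩

def blockOf (x : Fin (dtot dv)) : Fin k := (finSigmaFinEquiv.symm x).1

theorem blockOf_emb (i : Fin k) (r : Fin (dv i)) : blockOf dv (emb dv i r) = i := by
  rw [blockOf, emb_eq_finSigmaFinEquiv, Equiv.symm_apply_apply]

theorem exists_eq_emb (x : Fin (dtot dv)) : ∃ i r, x = emb dv i r :=
  ⟨_, (finSigmaFinEquiv.symm x).2,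
    ((emb_eq_finSigmaFinEquiv dv _ _).trans (finSigmaFinEquiv.apply_symm_apply x)).symm⟩

theorem off_succ {i j : Fin k} (hij : (j : ℕ) = i + 1) : off dv j = off dv i + dv i := by
  have hIio : Finset.Iio j = insert i (Finset.Iio i) := by
    ext t
    simp only [Finset.mem_Iio, Finset.mem_insert, Fin.lt_def, Fin.ext_iff]
    omega
  rw [off, off, hIio, Finset.sum_insert (by simp), add_comm]

def blockWeight (x : Fin (dtot dv)) : ℤ := (blockOf dv x : ℕ) - (x : ℕ)

theorem blockWeight_emb (i : Fin k) (r : Fin (dv i)) :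
    blockWeight dv (emb dv i r) = (i : ℕ) - (off dv i + r : ℕ) := by
  rw [blockWeight, blockOf_emb]
  rfl

variable {F : Type*} [Field F]

theorem Dmat_zero_ne_zero {x y : Fin (dtot dv)} (h : Dmat dv (0 : F) 0 x y ≠ 0) :
    ∃ i a b, x = emb dv i a ∧ y = emb dv i b ∧ (b : ℕ) = a + 1 := by
  rw [Dmat, Matrix.sum_apply] at h
  obtain ⟨i, -, hi⟩ := Finset.exists_ne_zero_of_sum_ne_zero h
  rw [embMat, Matrix.of_apply] at hi
  obtain ⟨a, -, ha⟩ := Finset.exists_ne_zero_of_sum_ne_zero hi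
  obtain ⟨b, -, hab⟩ := Finset.exists_ne_zero_of_sum_ne_zero ha
  split_ifs at hab with hxy
  · refine ⟨i, a, b, hxy.1, hxy.2, ?_⟩
    by_contra hne
    simp [Jord, hne] at hab
  · exact absurd rfl hab

variable {dv}

theorem val_eq_succ_of_Dmat_zero_ne_zero {x y : Fin (dtot dv)}
    (h : Dmat dv (0 : F) 0 x y ≠ 0) : (y : ℕ) = x + 1 := by
  obtain ⟨i, a, b, rfl, rfl, hab⟩ := Dmat_zero_ne_zero dv h
  simp only [emb]
  omega

theorem Dmat_zero_mem_degLE_index :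
    Dmat dv (0 : F) 0 ∈ degLE (fun x : Fin (dtot dv) => -(x : ℤ)) (-1) := by
  intro x y hxy
  by_contra h
  have := val_eq_succ_of_Dmat_zero_ne_zero h
  simp only at hxy
  omega

theorem blockWeight_sub_of_Dmat_zero_ne_zero {x y : Fin (dtot dv)}
    (h : Dmat dv (0 : F) 0 x y ≠ 0) : blockWeight dv y - blockWeight dv x = -1 := by
  obtain ⟨i, a, b, rfl, rfl, hab⟩ := Dmat_zero_ne_zero dv h
  rw [blockWeight_emb, blockWeight_emb]
  omega

end Blocks

section Corners

variable {F : Type*} [Field F] {k : ℕ} (dv : Fin k → ℕ)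

def IsCorner (x y : Fin (dtot dv)) : Prop :=
  ∃ i j : Fin k, (j : ℕ) = (i : ℕ) + 1 ∧ (x : ℕ) = off dv i + (dv i - 1) ∧
    (y : ℕ) = off dv j

theorem CanE_apply (x y : Fin (dtot dv)) :
    CanE F dv x y = if IsCorner dv x y then 1 else 0 := by
  rw [CanE, Matrix.of_apply]
  exact if_congr Iff.rfl rfl rfl

variable {dv}

theorem IsCorner.val_eq_succ (hdv : ∀ i, 0 < dv i) {x y : Fin (dtot dv)}
    (h : IsCorner dv x y) : (y : ℕ) = x + 1 := by
  obtain ⟨i, j, hij, hx, hy⟩ := h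
  have := hdv i
  rw [hy, off_succ dv hij]
  omega

end Corners

namespace IsEShaped

variable {F : Type*} [Field F] {k : ℕ} {dv : Fin k → ℕ}
  {A : Matrix (Fin (dtot dv)) (Fin (dtot dv)) F}

theorem exists_of_ne_zero (hA : IsEShaped dv A) {x y : Fin (dtot dv)} (h : A x y ≠ 0) :
    ∃ (i j : Fin k) (a : Fin (dv i)) (b : Fin (dv j)),
      (j : ℕ) = (i : ℕ) + 1 ∧ x = emb dv i a ∧ y = emb dv j b := by
  obtain ⟨i, a, rfl⟩ := exists_eq_emb dv x
  obtain ⟨j, b, rfl⟩ := exists_eq_emb dv y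
  refine ⟨i, j, a, b, by_contra fun hij => h ?_, rfl, rfl⟩
  exact congrFun (congrFun (hA.1 i j hij) a) b

theorem mem_degLE_index (hA : IsEShaped dv A) :
    A ∈ degLE (fun x : Fin (dtot dv) => -(x : ℤ)) (-1) := by
  intro x y hxy
  by_contra h
  obtain ⟨i, j, a, b, hij, rfl, rfl⟩ := hA.exists_of_ne_zero h
  simp only [emb, off_succ dv hij] at hxy
  omega

theorem mem_degLE_blockWeight (hA : IsEShaped dv A) : A ∈ degLE (blockWeight dv) 0 := by
  intro x y hxy
  by_contra h
  obtain ⟨i, j, a, b, hij, rfl, rfl⟩ := hA.exists_of_ne_zero h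
  rw [blockWeight_emb, blockWeight_emb, off_succ dv hij] at hxy
  omega

theorem homogPart_ne_zero_iff_isCorner (hdv : ∀ i, 0 < dv i) (hA : IsEShaped dv A)
    (x y : Fin (dtot dv)) : homogPart (blockWeight dv) 0 A x y ≠ 0 ↔ IsCorner dv x y := by
  rw [homogPart_apply]
  constructor
  · intro h
    split_ifs at h with hw
    · obtain ⟨i, j, a, b, hij, rfl, rfl⟩ := hA.exists_of_ne_zero h
      rw [blockWeight_emb, blockWeight_emb, off_succ dv hij] at hw
      refine ⟨i, j, hij, ?_, ?_⟩ <;> simp only [emb] <;> omega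
    · exact absurd rfl h
  · rintro ⟨i, j, hij, hx, hy⟩
    obtain rfl : x = emb dv i ⟨dv i - 1, Nat.sub_lt (hdv i) one_pos⟩ := Fin.ext hx
    obtain rfl : y = emb dv j ⟨0, hdv j⟩ := Fin.ext hy
    have hw : blockWeight dv (emb dv j ⟨0, hdv j⟩) -
        blockWeight dv (emb dv i ⟨dv i - 1, Nat.sub_lt (hdv i) one_pos⟩) = 0 := by
      rw [blockWeight_emb, blockWeight_emb, off_succ dv hij]
      have := hdv i
      dsimp only
      omega
    rw [if_pos hw]
    exact hA.2 i j hij _ _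

end IsEShaped

section SubalgebraN

variable {F : Type*} [Field F] {k : ℕ} {dv : Fin k → ℕ}
  {A : Matrix (Fin (dtot dv)) (Fin (dtot dv)) F}

theorem nAlg_le {K : LieSubalgebra F (Matrix (Fin (dtot dv)) (Fin (dtot dv)) F)}
    (hD : Dmat dv (0 : F) 0 ∈ K) (hA : A ∈ K) : nAlg F dv A ≤ K := by
  refine LieSubalgebra.lieSpan_le.mpr ?_
  rintro _ ⟨l, rfl⟩
  induction l with
  | zero => exact hA
  | succ l ih => rw [Function.iterate_succ_apply']; exact K.lie_mem hD ih

theorem isNilpotent_nAlg (hA : IsEShaped dv A) : LieRing.IsNilpotent (nAlg F dv A) :=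
  isNilpotent_of_le_negDegSubalgebra (nAlg_le Dmat_zero_mem_degLE_index hA.mem_degLE_index)

theorem lowerCentralSeries_nAlg_homogPart_eq_bot (hA : IsEShaped dv A) {m : ℕ}
    (h : LieModule.lowerCentralSeries F (nAlg F dv A) (nAlg F dv A) m = ⊥) :
    LieModule.lowerCentralSeries F (nAlg F dv (homogPart (blockWeight dv) 0 A))
      (nAlg F dv (homogPart (blockWeight dv) 0 A)) m = ⊥ := by
  unfold nAlg at h ⊢
  refine lowerCentralSeries_lieSpan_eq_bot_of_homogPart (w := blockWeight dv) ?_ h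
  rintro _ ⟨l, rfl⟩
  obtain ⟨hmem, hhom⟩ := iterate_lie_mem_degLE_and_homogPart (D := Dmat dv (0 : F) 0)
    (fun _ _ => blockWeight_sub_of_Dmat_zero_ne_zero) hA.mem_degLE_blockWeight l
  exact ⟨(fun Y => ⁅Dmat dv (0 : F) 0, Y⁆)^[l] A, ⟨l, rfl⟩, _, hmem, hhom⟩

theorem nAlg_map_lieEquiv
    (e : Matrix (Fin (dtot dv)) (Fin (dtot dv)) F ≃ₗ⁅F⁆
      Matrix (Fin (dtot dv)) (Fin (dtot dv)) F)
    (he : e (Dmat dv 0 0) = Dmat dv 0 0) (B : Matrix (Fin (dtot dv)) (Fin (dtot dv)) F) :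
    (nAlg F dv B).map (e : _ →ₗ⁅F⁆ _) = nAlg F dv (e B) := by
  have hcomm : Function.Semiconj e (fun Y => ⁅Dmat dv (0 : F) 0, Y⁆)
      (fun Y => ⁅Dmat dv (0 : F) 0, Y⁆) := fun Y => by
    rw [LieEquiv.map_lie, he]
  rw [nAlg, nAlg, LieSubalgebra.map_lieSpan]
  congr 1
  ext X
  constructor
  · rintro ⟨_, ⟨l, rfl⟩, rfl⟩
    exact ⟨l, hcomm.iterate_right l B⟩
  · rintro ⟨l, rfl⟩
    exact ⟨_, ⟨l, rfl⟩, hcomm.iterate_right l B⟩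

theorem exists_lieEquiv_homogPart_eq_CanE (hdv : ∀ i, 0 < dv i) (hA : IsEShaped dv A) :
    ∃ e : Matrix (Fin (dtot dv)) (Fin (dtot dv)) F ≃ₗ⁅F⁆
        Matrix (Fin (dtot dv)) (Fin (dtot dv)) F,
      e (Dmat dv 0 0) = Dmat dv 0 0 ∧ e (homogPart (blockWeight dv) 0 A) = CanE F dv := by
  set N := homogPart (blockWeight dv) 0 A
  have hP : Invertible (Matrix.diagonal (superdiagScale N)) :=
    (Matrix.isUnit_diagonal.mpr
      (Pi.isUnit_iff.mpr fun x => (superdiagScale_ne_zero N x).isUnit)).invertible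
  refine ⟨Matrix.lieConj _ hP, ?_, ?_⟩ <;> rw [Matrix.lieConj_apply]
  · refine conj_superdiagScale_of_disjoint fun x y hxy =>
      ⟨val_eq_succ_of_Dmat_zero_ne_zero hxy, ?_⟩
    change homogPart (blockWeight dv) 0 A x y = 0
    rw [homogPart_apply, if_neg (by rw [blockWeight_sub_of_Dmat_zero_ne_zero hxy]; norm_num)]
  · rw [conj_superdiagScale_of_superdiag
      fun x y h => ((hA.homogPart_ne_zero_iff_isCorner hdv x y).mp h).val_eq_succ hdv]
    ext x y
    rw [Matrix.of_apply, CanE_apply, ← hA.homogPart_ne_zero_iff_isCorner hdv]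
    split_ifs <;> trivial

theorem lowerCentralSeries_nAlg_CanE_eq_bot (hdv : ∀ i, 0 < dv i) (hA : IsEShaped dv A)
    {m : ℕ} (h : LieModule.lowerCentralSeries F (nAlg F dv A) (nAlg F dv A) m = ⊥) :
    LieModule.lowerCentralSeries F (nAlg F dv (CanE F dv)) (nAlg F dv (CanE F dv)) m = ⊥ := by
  obtain ⟨e, hD, hE⟩ := exists_lieEquiv_homogPart_eq_CanE hdv hA
  rw [← hE, ← nAlg_map_lieEquiv e hD]
  exact (lowerCentralSeries_eq_bot_iff_of_lieEquiv
    (LieSubalgebra.equivMapOfInjective _ _ e.injective) m).mp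
    (lowerCentralSeries_nAlg_homogPart_eq_bot hA h)

end SubalgebraN

theorem statement4_general {F : Type*} [Field F] {k : ℕ}
    (dv : Fin k → ℕ) (hdv : ∀ i, 0 < dv i)
    (A : Matrix (Fin (dtot dv)) (Fin (dtot dv)) F) (hA : IsEShaped dv A) :
    LieRing.IsNilpotent ↥(nAlg F dv A) ∧
    LieRing.IsNilpotent ↥(nAlg F dv (CanE F dv)) ∧
    nilDeg F ↥(nAlg F dv (CanE F dv)) ≤ nilDeg F ↥(nAlg F dv A) := by
  have hnil := isNilpotent_nAlg hA
  have hlcs := fun m => lowerCentralSeries_nAlg_CanE_eq_bot (m := m) hdv hA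
  exact ⟨hnil, isNilpotent_of_lowerCentralSeries_eq_bot_imp hlcs,
    nilDeg_le_of_lowerCentralSeries_eq_bot_imp hlcs⟩

/-- Proposition `prop.struture`, part (5):  `n(S)` and `n(C)` are nilpotent and
the nilpotency degree of `n(S)` is at least that of `n(C)`. -/
theorem statement4 {F : Type*} [Field F] [CharZero F] {k : ℕ} (hk : 2 ≤ k)
    (dv : Fin k → ℕ) (hdv : ∀ i, 0 < dv i)
    (A : Matrix (Fin (dtot dv)) (Fin (dtot dv)) F) (hA : IsEShaped dv A) :
    LieRing.IsNilpotent ↥(nAlg F dv A) ∧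
    LieRing.IsNilpotent ↥(nAlg F dv (CanE F dv)) ∧
    nilDeg F ↥(nAlg F dv (CanE F dv)) ≤ nilDeg F ↥(nAlg F dv A) :=
  statement4_general dv hdv A hA

end Paper
end
end

section
/- For all 1 ≤ i < j ≤ k, r_{i,j} ∈ {0, 1, 2}. Equivalently: if there exists X ∈ h(0,0,C) with p_{i,j}(X) ≠ 0, then there exists X ∈ h(0,0,C) with p_{i,j}(X) ≠ 0 and rank p_{i,j}(X) ≤ 2. -/
open scoped Classical

noncomputable section

namespace Paper

attribute [local instance 100] LieRing.ofAssociativeRing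

variable {F : Type*}

/-!
For `j = i + 1` the block `p_{i,i+1}(E(C))` itself is nonzero of rank one. For `j ≥ i + 2`,
every element of `h(0,0,C)` is a combination of left-normed brackets of the generators
`D = D(0,0)` and `E = E(C)`. As `D` is block diagonal, `ad D` keeps the `(i,j)`-block zero, and
the `(i,j)`-blocks of `D` and `E` vanish; so if `p_{i,j}[E, Z] = 0` for all `Z ∈ h(0,0,C)`, all
`(i,j)`-blocks vanish. Otherwise some `p_{i,j}[E, Z] = C(i) p_{i+1,j}(Z) - p_{i,j-1}(Z) C(j-1)` is
nonzero, and it has rank at most two because each `C(l)` has rank one.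
-/

theorem _root_.Matrix.rank_sub_le {K m n : Type*} [Field K] [Fintype m] [Fintype n]
    (A B : Matrix m n K) : (A - B).rank ≤ A.rank + B.rank := by
  have hrange : LinearMap.range (A - B).mulVecLin ≤
      LinearMap.range A.mulVecLin ⊔ LinearMap.range B.mulVecLin := by
    rintro _ ⟨v, rfl⟩
    rw [Matrix.mulVecLin_apply, Matrix.sub_mulVec]
    exact Submodule.sub_mem_sup ⟨v, rfl⟩ ⟨v, rfl⟩
  exact (Submodule.finrank_mono hrange).trans
    (Submodule.finrank_add_le_finrank_add_finrank _ _)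

theorem _root_.LieSubalgebra.lieSpan_induction_left {R L : Type*} [CommRing R] [LieRing L]
    [LieAlgebra R L] {s : Set L} {p : L → Prop} (mem : ∀ x ∈ s, p x) (zero : p 0)
    (add : ∀ x y, p x → p y → p (x + y)) (smul : ∀ (a : R) x, p x → p (a • x))
    (lie : ∀ g ∈ s, ∀ y ∈ LieSubalgebra.lieSpan R L s, p y → p ⁅g, y⁆) {x : L}
    (hx : x ∈ LieSubalgebra.lieSpan R L s) : p x := by
  let N : Submodule R L := sInf {q | s ⊆ q ∧ ∀ g ∈ s, ∀ y ∈ q, ⁅g, y⁆ ∈ q}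
  have N_le : ∀ q : Submodule R L, s ⊆ q → (∀ g ∈ s, ∀ y ∈ q, ⁅g, y⁆ ∈ q) → N ≤ q :=
    fun q hs had => sInf_le ⟨hs, had⟩
  have subset_N : s ⊆ N := fun g hg => Submodule.mem_sInf.2 fun q hq => hq.1 hg
  have lie_gen_mem : ∀ g ∈ s, ∀ y ∈ N, ⁅g, y⁆ ∈ N := fun g hg y hy =>
    Submodule.mem_sInf.2 fun q hq => hq.2 g hg y (Submodule.mem_sInf.1 hy q hq)
  -- `N` is closed under the bracket, because `{x | ⁅N, x⁆ ⊆ N}` is closed under `ad g`, `g ∈ s`.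
  let N' : Submodule R L :=
    { carrier := {x | ∀ y ∈ N, ⁅y, x⁆ ∈ N}
      add_mem' := fun hx hx' y hy => by rw [lie_add]; exact add_mem (hx y hy) (hx' y hy)
      zero_mem' := fun y _ => by rw [lie_zero]; exact zero_mem _
      smul_mem' := fun a x hx y hy => by rw [lie_smul]; exact N.smul_mem a (hx y hy) }
  have N_le_N' : N ≤ N' := by
    refine N_le N' (fun g hg y hy => ?_) (fun g hg x hx y hy => ?_)
    · rw [← lie_skew]; exact neg_mem (lie_gen_mem g hg y hy)
    · rw [leibniz_lie]
      refine add_mem (hx _ ?_) (lie_gen_mem g hg _ (hx y hy))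
      rw [← lie_skew]; exact neg_mem (lie_gen_mem g hg y hy)
  let K : LieSubalgebra R L := { N with lie_mem' := fun hx hy => N_le_N' hy _ hx }
  let Q : Submodule R L :=
    { carrier := {x | x ∈ LieSubalgebra.lieSpan R L s ∧ p x}
      add_mem' := fun hx hy => ⟨add_mem hx.1 hy.1, add _ _ hx.2 hy.2⟩
      zero_mem' := ⟨zero_mem _, zero⟩
      smul_mem' := fun a x hx => ⟨SMulMemClass.smul_mem a hx.1, smul a x hx.2⟩ }
  have N_le_Q : N ≤ Q := N_le Q (fun g hg => ⟨LieSubalgebra.subset_lieSpan hg, mem g hg⟩)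
    fun g hg y hy => ⟨LieSubalgebra.lie_mem _ (LieSubalgebra.subset_lieSpan hg) hy.1,
      lie g hg y hy.1 hy.2⟩
  exact (N_le_Q ((LieSubalgebra.lieSpan_le (K := K)).2 subset_N hx)).2

section Blocks

variable [Field F] {k : ℕ} {dv : Fin k → ℕ}

lemma off_add_le_off {i j : Fin k} (h : i < j) : off dv i + dv i ≤ off dv j := by
  have hle : ∑ t ∈ insert i (Finset.Iio i), dv t ≤ ∑ t ∈ Finset.Iio j, dv t :=
    Finset.sum_le_sum_of_subset fun t ht => by
      rcases Finset.mem_insert.mp ht with rfl | ht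
      · exact Finset.mem_Iio.mpr h
      · exact Finset.mem_Iio.mpr ((Finset.mem_Iio.mp ht).trans h)
  rw [Finset.sum_insert (by simp)] at hle
  unfold off
  omega

lemma eq_of_off_add_eq {i j : Fin k} {r s : ℕ} (hr : r < dv i) (hs : s < dv j)
    (h : off dv i + r = off dv j + s) : i = j := by
  by_contra hne
  rcases lt_or_gt_of_ne hne with hlt | hlt
  · have := off_add_le_off (dv := dv) hlt; omega
  · have := off_add_le_off (dv := dv) hlt; omega

lemma emb_inj {i j : Fin k} {r : Fin (dv i)} {s : Fin (dv j)}
    (h : emb dv i r = emb dv j s) : i = j ∧ (r : ℕ) = (s : ℕ) := by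
  have hv : off dv i + (r : ℕ) = off dv j + (s : ℕ) := congrArg Fin.val h
  obtain rfl := eq_of_off_add_eq r.isLt s.isLt hv
  exact ⟨rfl, by omega⟩

def embEquiv (dv : Fin k → ℕ) : (Σ i : Fin k, Fin (dv i)) ≃ Fin (dtot dv) :=
  Equiv.ofBijective (fun p => emb dv p.1 p.2) (by
    rw [Fintype.bijective_iff_injective_and_card]
    refine ⟨?_, by simp only [Fintype.card_sigma, Fintype.card_fin]; rfl⟩
    rintro ⟨i, r⟩ ⟨j, s⟩ h
    obtain ⟨rfl, hrs⟩ := emb_inj h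
    simp only [Sigma.mk.inj_iff, heq_eq_eq, true_and]
    exact Fin.ext hrs)

lemma sum_emb {M : Type*} [AddCommMonoid M] (f : Fin (dtot dv) → M) :
    ∑ x, f x = ∑ i : Fin k, ∑ r : Fin (dv i), f (emb dv i r) := by
  rw [← Equiv.sum_comp (embEquiv dv) f, ← Finset.univ_sigma_univ, Finset.sum_sigma]
  rfl

lemma blk_sub (i j : Fin k) (A B : Matrix (Fin (dtot dv)) (Fin (dtot dv)) F) :
    blk dv i j (A - B) = blk dv i j A - blk dv i j B := rfl

lemma blk_sum {ι : Type*} (s : Finset ι) (i j : Fin k)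
    (A : ι → Matrix (Fin (dtot dv)) (Fin (dtot dv)) F) :
    blk dv i j (∑ t ∈ s, A t) = ∑ t ∈ s, blk dv i j (A t) := by
  ext r u
  simp [blk, Matrix.sum_apply]

lemma blk_mul (i j : Fin k) (A B : Matrix (Fin (dtot dv)) (Fin (dtot dv)) F) :
    blk dv i j (A * B) = ∑ t : Fin k, blk dv i t A * blk dv t j B := by
  ext r s
  simp only [blk, Matrix.of_apply, Matrix.mul_apply, Matrix.sum_apply]
  exact sum_emb (fun x => A (emb dv i r) x * B x (emb dv j s))

lemma blk_mul_of_blk_left {i u j : Fin k} {A : Matrix (Fin (dtot dv)) (Fin (dtot dv)) F}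
    (hA : ∀ t, t ≠ u → blk dv i t A = 0) (B : Matrix (Fin (dtot dv)) (Fin (dtot dv)) F) :
    blk dv i j (A * B) = blk dv i u A * blk dv u j B := by
  rw [blk_mul, Finset.sum_eq_single u (fun t _ ht => by rw [hA t ht, Matrix.zero_mul])
    (fun h => absurd (Finset.mem_univ u) h)]

lemma blk_mul_of_blk_right {i u j : Fin k} (A : Matrix (Fin (dtot dv)) (Fin (dtot dv)) F)
    {B : Matrix (Fin (dtot dv)) (Fin (dtot dv)) F} (hB : ∀ t, t ≠ u → blk dv t j B = 0) :
    blk dv i j (A * B) = blk dv i u A * blk dv u j B := by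
  rw [blk_mul, Finset.sum_eq_single u (fun t _ ht => by rw [hB t ht, Matrix.mul_zero])
    (fun h => absurd (Finset.mem_univ u) h)]

lemma blk_embMat_of_ne {s t i j : Fin k} (h : ¬(s = i ∧ t = j))
    (M : Matrix (Fin (dv i)) (Fin (dv j)) F) : blk dv s t (embMat dv i j M) = 0 := by
  ext r u
  simp only [blk, embMat, Matrix.of_apply, Matrix.zero_apply]
  refine Finset.sum_eq_zero fun r' _ => Finset.sum_eq_zero fun s' _ => if_neg ?_
  rintro ⟨h1, h2⟩
  exact h ⟨(emb_inj h1).1, (emb_inj h2).1⟩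

lemma blk_Dmat_of_ne (α lam : F) {s t : Fin k} (h : s ≠ t) :
    blk dv s t (Dmat dv α lam) = 0 := by
  rw [Dmat, blk_sum]
  exact Finset.sum_eq_zero fun u _ => blk_embMat_of_ne (by rintro ⟨rfl, rfl⟩; exact h rfl) _

lemma blk_CanE_eq_vecMulVec (hdv : ∀ i, 0 < dv i) (s t : Fin k) :
    blk dv s t (CanE F dv) = Matrix.vecMulVec
      (fun r : Fin (dv s) => if (t : ℕ) = s + 1 ∧ (r : ℕ) = dv s - 1 then 1 else 0)
      (fun u : Fin (dv t) => if (u : ℕ) = 0 then 1 else 0) := by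
  ext r u
  simp only [blk, CanE, Matrix.of_apply, Matrix.vecMulVec_apply, ite_mul, one_mul, zero_mul,
    ← ite_and]
  refine if_congr ⟨?_, ?_⟩ rfl rfl
  · rintro ⟨a, b, hab, hx, hy⟩
    have hx' : off dv s + (r : ℕ) = off dv a + (dv a - 1) := hx
    have hy' : off dv t + (u : ℕ) = off dv b + 0 := hy
    obtain rfl : s = a := eq_of_off_add_eq r.isLt (by have := hdv a; omega) hx'
    obtain rfl : t = b := eq_of_off_add_eq u.isLt (hdv b) hy'
    omega
  · rintro ⟨⟨hst, hr⟩, hu⟩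
    exact ⟨s, t, hst, by simp [emb, hr], by simp [emb, hu]⟩

lemma blk_CanE_of_ne (hdv : ∀ i, 0 < dv i) {s t : Fin k} (h : (t : ℕ) ≠ s + 1) :
    blk dv s t (CanE F dv) = 0 := by
  ext r u
  simp [blk_CanE_eq_vecMulVec hdv, Matrix.vecMulVec_apply, h]

lemma blk_CanE_succ_ne_zero (hdv : ∀ i, 0 < dv i) {s t : Fin k} (h : (t : ℕ) = s + 1) :
    blk dv s t (CanE F dv) ≠ 0 := by
  intro h0
  have := congrFun (congrFun h0 ⟨dv s - 1, by have := hdv s; omega⟩) ⟨0, hdv t⟩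
  simp [blk_CanE_eq_vecMulVec hdv, Matrix.vecMulVec_apply, h] at this

lemma rank_blk_CanE_le_one (hdv : ∀ i, 0 < dv i) (s t : Fin k) :
    (blk dv s t (CanE F dv)).rank ≤ 1 := by
  rw [blk_CanE_eq_vecMulVec hdv]
  exact Matrix.rank_vecMulVec_le _ _

end Blocks

section Generated

variable [Field F] {k : ℕ} {dv : Fin k → ℕ}

lemma mem_hAlg_self (α lam : F) (A : Matrix (Fin (dtot dv)) (Fin (dtot dv)) F) :
    A ∈ hAlg F dv α lam A :=
  LieSubalgebra.subset_lieSpan (Set.mem_insert_of_mem _ rfl)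

lemma blk_lie_Dmat_eq_zero (α lam : F) {i j : Fin k}
    {Y : Matrix (Fin (dtot dv)) (Fin (dtot dv)) F} (hY : blk dv i j Y = 0) :
    blk dv i j ⁅Dmat dv α lam, Y⁆ = 0 := by
  rw [Ring.lie_def, blk_sub,
    blk_mul_of_blk_left (u := i) fun t ht => blk_Dmat_of_ne α lam ht.symm,
    blk_mul_of_blk_right (u := j) _ fun t ht => blk_Dmat_of_ne α lam ht, hY,
    Matrix.mul_zero, Matrix.zero_mul, sub_zero]

lemma blk_lie_CanE (hdv : ∀ i, 0 < dv i) {i i' j' j : Fin k} (hi : (i' : ℕ) = i + 1)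
    (hj : (j : ℕ) = j' + 1) (Z : Matrix (Fin (dtot dv)) (Fin (dtot dv)) F) :
    blk dv i j ⁅CanE F dv, Z⁆ =
      blk dv i i' (CanE F dv) * blk dv i' j Z - blk dv i j' Z * blk dv j' j (CanE F dv) := by
  rw [Ring.lie_def, blk_sub,
    blk_mul_of_blk_left (u := i') fun t ht =>
      blk_CanE_of_ne hdv fun h => ht (Fin.ext (by omega)),
    blk_mul_of_blk_right (u := j') _ fun t ht =>
      blk_CanE_of_ne hdv fun h => ht (Fin.ext (by omega))]

lemma rank_blk_lie_CanE_le_two (hdv : ∀ i, 0 < dv i) {i j : Fin k} (hi : (i : ℕ) + 1 < k)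
    (hj : 0 < (j : ℕ)) (Z : Matrix (Fin (dtot dv)) (Fin (dtot dv)) F) :
    (blk dv i j ⁅CanE F dv, Z⁆).rank ≤ 2 := by
  rw [blk_lie_CanE hdv (i' := ⟨i + 1, hi⟩) (j' := ⟨j - 1, by omega⟩) rfl
    (Nat.sub_add_cancel hj).symm]
  calc _ ≤ _ + _ := Matrix.rank_sub_le _ _
    _ ≤ 1 + 1 := add_le_add
        ((Matrix.rank_mul_le_left _ _).trans (rank_blk_CanE_le_one hdv _ _))
        ((Matrix.rank_mul_le_right _ _).trans (rank_blk_CanE_le_one hdv _ _))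

lemma blk_eq_zero_of_forall_blk_lie_CanE_eq_zero (hdv : ∀ i, 0 < dv i) {i j : Fin k}
    (hij : i ≠ j) (hsucc : (j : ℕ) ≠ i + 1)
    (h : ∀ Z ∈ hAlg F dv 0 0 (CanE F dv), blk dv i j ⁅CanE F dv, Z⁆ = 0)
    {X : Matrix (Fin (dtot dv)) (Fin (dtot dv)) F} (hX : X ∈ hAlg F dv 0 0 (CanE F dv)) :
    blk dv i j X = 0 := by
  refine LieSubalgebra.lieSpan_induction_left (p := fun X => blk dv i j X = 0)
    ?_ rfl ?_ ?_ ?_ hX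
  · rintro g (rfl | rfl)
    · exact blk_Dmat_of_ne 0 0 hij
    · exact blk_CanE_of_ne hdv hsucc
  · intro x y hx hy
    change blk dv i j x + blk dv i j y = 0
    rw [hx, hy, add_zero]
  · intro a x hx
    change a • blk dv i j x = 0
    rw [hx, smul_zero]
  · rintro g (rfl | rfl) Y hY hYblk
    · exact blk_lie_Dmat_eq_zero 0 0 hYblk
    · exact h Y hY

theorem exists_mem_hAlg_blk_ne_zero_rank_le_two (hdv : ∀ i, 0 < dv i) {i j : Fin k}
    (hij : i < j) (hex : ∃ X ∈ hAlg F dv 0 0 (CanE F dv), blk dv i j X ≠ 0) :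
    ∃ X ∈ hAlg F dv 0 0 (CanE F dv), blk dv i j X ≠ 0 ∧ (blk dv i j X).rank ≤ 2 := by
  have hij' : (i : ℕ) < j := hij
  by_cases hsucc : (j : ℕ) = i + 1
  · exact ⟨CanE F dv, mem_hAlg_self 0 0 _, blk_CanE_succ_ne_zero hdv hsucc,
      (rank_blk_CanE_le_one hdv i j).trans one_le_two⟩
  by_cases hE : ∃ Z ∈ hAlg F dv 0 0 (CanE F dv), blk dv i j ⁅CanE F dv, Z⁆ ≠ 0
  · obtain ⟨Z, hZ, hne⟩ := hE
    exact ⟨_, LieSubalgebra.lie_mem _ (mem_hAlg_self 0 0 _) hZ, hne,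
      rank_blk_lie_CanE_le_two hdv (by omega) (by omega) Z⟩
  · push Not at hE
    obtain ⟨X, hX, hne⟩ := hex
    exact absurd (blk_eq_zero_of_forall_blk_lie_CanE_eq_zero hdv hij.ne hsucc hE hX) hne

end Generated

theorem statement6_general {F : Type*} [Field F] {k : ℕ}
    (dv : Fin k → ℕ) (hdv : ∀ i, 0 < dv i) (i j : Fin k) (hij : i < j) :
    (rr F dv i j = 0 ∨ rr F dv i j = 1 ∨ rr F dv i j = 2) ∧
    ((∃ X ∈ hAlg F dv 0 0 (CanE F dv), blk dv i j X ≠ 0) →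
      ∃ X ∈ hAlg F dv 0 0 (CanE F dv), blk dv i j X ≠ 0 ∧ (blk dv i j X).rank ≤ 2) := by
  have key := exists_mem_hAlg_blk_ne_zero_rank_le_two (F := F) hdv hij
  refine ⟨?_, key⟩
  suffices rr F dv i j ≤ 2 by omega
  unfold rr
  split_ifs with hall
  · exact zero_le_two
  · push Not at hall
    obtain ⟨X, hX, hne, hrank⟩ := key hall
    exact le_trans (Nat.sInf_le ⟨X, hX, hne, rfl⟩) hrank

/-- Proposition `prop.r012`:  `r_{i,j} ∈ {0,1,2}`; equivalently, if some member
of `h(0,0,C)` has nonzero `(i,j)`-block, then some member has a nonzero `(i,j)`-block of rank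
at most `2`. -/
theorem statement6 {F : Type*} [Field F] [CharZero F] {k : ℕ} (hk : 2 ≤ k)
    (dv : Fin k → ℕ) (hdv : ∀ i, 0 < dv i) (i j : Fin k) (hij : i < j) :
    (rr F dv i j = 0 ∨ rr F dv i j = 1 ∨ rr F dv i j = 2) ∧
    ((∃ X ∈ hAlg F dv 0 0 (CanE F dv), blk dv i j X ≠ 0) →
      ∃ X ∈ hAlg F dv 0 0 (CanE F dv), blk dv i j X ≠ 0 ∧ (blk dv i j X).rank ≤ 2) :=
  statement6_general dv hdv i j hij

end Paper
end
end
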